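/- arXiv:2603.02191 — 4 statements merged into one kernel-verified Lean document; each statement's English description precedes it below -/
import Mathlib

section
/- Let M be an n×n matrix, and for i,j ∈ [n] let D_{ij} be the determinant of the matrix whose (k,ℓ) entry equals m_{kℓ} if k≠i and ℓ≠j, equals 1 if exactly one of k=i or ℓ=j holds, and equals 0 if k=i and ℓ=j. Fix j ∈ [n] and x ∈ [n] with x≠j, and let D_j be the determinant of M with its j-th column replaced by the all-ones vector. Then D_j = ∑_{i=1}^n m_{ix} · D_{ij}. -/
/-- With `D j` the determinant of `M` with `j`-th column replaced by ones, and
`Dij i j` the determinant of the matrix agreeing with `M` off the `i`-th row and `j`-th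
column, with ones on the `i`-th row and `j`-th column except a `0` in position `(i,j)`,
for any fixed `j` and `x ≠ j` we have `D j = ∑ i, M i x * Dij i j`. -/
theorem detUpdateColumnOnes_eq_sum {R : Type*} [CommRing R] {n : ℕ}
    (M : Matrix (Fin n) (Fin n) R) (j x : Fin n) (hxj : x ≠ j) :
    (M.updateCol j (fun _ => 1)).det =
      ∑ i, M i x *
        (((M.updateRow i (fun _ => 1)).updateCol j
          (fun k => if k = i then 0 else 1)).det) := by
  set N := M.updateCol j (fun _ => 1) with hN
  have hNx : ∀ i, N i x = M i x := fun i => by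
    simp [hN, Matrix.updateCol_apply, hxj]
  -- rewrite each summand's matrix as a row-update of N
  have hA : ∀ i : Fin n,
      ((M.updateRow i (fun _ => 1)).updateCol j (fun k => if k = i then (0:R) else 1))
        = N.updateRow i (fun ℓ => if ℓ = j then (0:R) else 1) := by
    intro i; ext k ℓ
    by_cases hk : k = i <;> by_cases hl : ℓ = j <;>
      simp [hN, Matrix.updateRow_apply, Matrix.updateCol_apply, hk, hl]
  have hvec : (fun ℓ : Fin n => if ℓ = j then (0:R) else 1)
      = (fun _ => (1:R)) + (-(Pi.single j (1:R))) := by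
    ext ℓ; by_cases h : ℓ = j <;> simp [h, Pi.single_apply]
  have hones : (fun _ : Fin n => (1:R)) = ∑ k, Pi.single k (1:R) := by
    ext ℓ; simp [Pi.single_apply]
  have hdet1 : ∀ i : Fin n, (N.updateRow i (fun _ => (1:R))).det
      = ∑ k, (N.adjugate) k i := by
    intro i
    rw [hones]
    have := (Matrix.detRowAlternating :
        (Fin n → R) [⋀^Fin n]→ₗ[R] R).map_update_sum Finset.univ i
        (fun k => Pi.single k (1:R)) N
    simp only [Matrix.det_updateRow_eq_zero, Matrix.updateRow,
      Matrix.adjugate_apply] at this ⊢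
    exact this
  have hdet2 : ∀ i : Fin n, (N.updateRow i (-(Pi.single j (1:R)))).det
      = -(N.adjugate j i) := by
    intro i
    have : (-(Pi.single j (1:R)) : Fin n → R) = (-1 : R) • ((Pi.single j (1:R)) : Fin n → R) := by
      ext ℓ; simp
    rw [this, Matrix.det_updateRow_smul, Matrix.adjugate_apply]
    ring
  have key : ∀ i : Fin n,
      (((M.updateRow i (fun _ => 1)).updateCol j
        (fun k => if k = i then (0:R) else 1)).det)
      = (∑ k, N.adjugate k i) - N.adjugate j i := by
    intro i
    rw [hA i, hvec, Matrix.det_updateRow_add, hdet1 i, hdet2 i]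
    ring
  simp_rw [key, mul_sub, Finset.sum_sub_distrib, Finset.mul_sum]
  have hmul : N.adjugate * N = N.det • (1 : Matrix (Fin n) (Fin n) R) :=
    Matrix.adjugate_mul N
  have h1 : ∑ i, ∑ k, M i x * N.adjugate k i = N.det := by
    rw [Finset.sum_comm]
    have : ∀ k, ∑ i, M i x * N.adjugate k i = (N.adjugate * N) k x := by
      intro k
      rw [Matrix.mul_apply]
      refine Finset.sum_congr rfl fun i _ => ?_
      rw [hNx i]; ring
    simp_rw [this, hmul]
    simp [Matrix.one_apply, Matrix.smul_apply]
  have h2 : ∑ i, M i x * N.adjugate j i = 0 := by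
    have : ∑ i, M i x * N.adjugate j i = (N.adjugate * N) j x := by
      rw [Matrix.mul_apply]
      refine Finset.sum_congr rfl fun i _ => ?_
      rw [hNx i]; ring
    rw [this, hmul]
    simp [Matrix.one_apply, (Ne.symm hxj : j ≠ x), Matrix.smul_apply]
  rw [h1, h2, sub_zero]
end

section
/- Let Γ be a 3×3 symmetric real matrix with zero diagonal such that the modified Cayley–Menger matrix CM~(Γ) = [[Γ, 1],[1ᵀ, 0]] is invertible. Then the (1,3) entry of the upper-left 3×3 block of CM~(Γ)⁻¹ vanishes if and only if Γ₁₃ = Γ₁₂ + Γ₂₃. -/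
open Matrix

/-- The modified Cayley–Menger matrix `CM~(Γ) = [[Γ, 1],[1ᵀ, 0]]`. -/
def CMt {d : ℕ} (Γ : Matrix (Fin d) (Fin d) ℝ) :
    Matrix (Fin d ⊕ Fin 1) (Fin d ⊕ Fin 1) ℝ :=
  Matrix.fromBlocks Γ (Matrix.of fun _ _ => 1) (Matrix.of fun _ _ => 1) 0

/-- for a symmetric zero-diagonal `3 × 3` matrix `Γ` with `CM~(Γ)`
invertible, the `(1,3)` entry of the upper-left block of `CM~(Γ)⁻¹` vanishes iff
`Γ₁₃ = Γ₁₂ + Γ₂₃`. -/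
theorem CMt_inv_entry_vanishes_iff (Γ : Matrix (Fin 3) (Fin 3) ℝ)
    (hsym : Γ.IsSymm) (hdiag : ∀ i, Γ i i = 0) (hinv : IsUnit (CMt Γ).det) :
    (CMt Γ)⁻¹ (Sum.inl 0) (Sum.inl 2) = 0 ↔ Γ 0 2 = Γ 0 1 + Γ 1 2 := by
  set M : Matrix (Fin (3 + 1)) (Fin (3 + 1)) ℝ :=
    !![0, Γ 0 1, Γ 0 2, 1; Γ 0 1, 0, Γ 1 2, 1; Γ 0 2, Γ 1 2, 0, 1; 1, 1, 1, 0] with hM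
  have h10 : Γ 1 0 = Γ 0 1 := hsym.apply 0 1
  have h20 : Γ 2 0 = Γ 0 2 := hsym.apply 0 2
  have h21 : Γ 2 1 = Γ 1 2 := hsym.apply 1 2
  have key : (Matrix.reindex finSumFinEquiv finSumFinEquiv) (CMt Γ) = M := by
    ext i j
    fin_cases i <;> fin_cases j <;>
      norm_num [CMt, hM, Matrix.fromBlocks, finSumFinEquiv, Fin.addCases,
        Fin.castLT, Fin.subNat, hdiag, h10, h20, h21] <;>
      first | rfl | exact h10 | exact h20 | exact h21
  have key2 : CMt Γ = (Matrix.reindex finSumFinEquiv.symm finSumFinEquiv.symm) M := by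
    rw [← key]; ext i j; simp
  rw [key2, Matrix.inv_reindex]
  have hdet : IsUnit M.det := by
    rw [key2, Matrix.det_reindex_self] at hinv; exact hinv
  have hentry : ((Matrix.reindex finSumFinEquiv.symm finSumFinEquiv.symm) M⁻¹)
      (Sum.inl 0) (Sum.inl 2) = M⁻¹ 0 2 := by
    rw [Matrix.reindex_apply, Matrix.submatrix_apply]
    rfl
  rw [hentry, Matrix.inv_def]
  have hadj : M.adjugate 0 2 = Γ 0 2 - Γ 0 1 - Γ 1 2 := by
    rw [Matrix.adjugate_apply]
    have hu : M.updateRow 2 (Pi.single 0 1) =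
        !![0, Γ 0 1, Γ 0 2, 1; Γ 0 1, 0, Γ 1 2, 1; 1, 0, 0, 0; 1, 1, 1, 0] := by
      ext i j
      fin_cases i <;> fin_cases j <;>
        simp [hM, Matrix.updateRow_apply, Pi.single_apply, Matrix.vecHead,
          Matrix.vecTail]
    rw [hu]
    simp [Matrix.det_succ_row_zero, Fin.sum_univ_succ, Matrix.det_fin_three,
      Fin.succAbove, Fin.castSucc, Fin.castAdd, Fin.castLE]
    ring
  rw [Matrix.smul_apply, hadj, smul_eq_mul]
  have hne : Ring.inverse M.det ≠ 0 := by
    rw [Ring.inverse_eq_inv]; exact inv_ne_zero hdet.ne_zero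
  constructor
  · intro h
    have := (mul_eq_zero.mp h).resolve_left hne
    linarith
  · intro h
    rw [show Γ 0 2 - Γ 0 1 - Γ 1 2 = 0 by linarith, mul_zero]
end

section
/- Let M be an invertible square matrix written in 2×2 block form M = [[A, B],[C, D]] with D invertible. Then rank(M) = rank(D) + rank(A − BD⁻¹C) (Guttman rank additivity). In particular, rank(M) = rank(D) if and only if the Schur complement A − BD⁻¹C is the zero matrix. -/
open Matrix LinearMap

/-- Auxiliary: the product of two submodules is linearly equivalent to their product type. -/
noncomputable def subProdEquiv {R M N : Type*} [CommRing R] [AddCommGroup M] [AddCommGroup N]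
    [Module R M] [Module R N] (S : Submodule R M) (T : Submodule R N) :
    (S.prod T) ≃ₗ[R] S × T where
  toFun x := (⟨x.1.1, x.2.1⟩, ⟨x.1.2, x.2.2⟩)
  invFun x := ⟨(x.1.1, x.2.1), ⟨x.1.2, x.2.2⟩⟩
  map_add' _ _ := rfl
  map_smul' _ _ := rfl
  left_inv _ := rfl
  right_inv _ := rfl

lemma range_prodMap' {R M N M' N' : Type*} [CommRing R] [AddCommGroup M] [AddCommGroup N]
    [AddCommGroup M'] [AddCommGroup N'] [Module R M] [Module R N] [Module R M'] [Module R N']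
    (f : M →ₗ[R] M') (g : N →ₗ[R] N') :
    range (f.prodMap g) = (range f).prod (range g) := by
  ext x
  constructor
  · rintro ⟨y, rfl⟩; exact ⟨⟨y.1, rfl⟩, ⟨y.2, rfl⟩⟩
  · rintro ⟨⟨a, ha⟩, ⟨b, hb⟩⟩
    exact ⟨(a, b), Prod.ext ha hb⟩

/-- Rank of a block-diagonal matrix is the sum of the ranks of the blocks. -/
lemma rank_fromBlocks_diag {p q r s : ℕ} (X : Matrix (Fin p) (Fin q) ℝ)
    (Y : Matrix (Fin r) (Fin s) ℝ) :
    (fromBlocks X 0 0 Y).rank = X.rank + Y.rank := by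
  let e₁ := LinearEquiv.sumArrowLequivProdArrow (Fin q) (Fin s) ℝ ℝ
  let e₂ := LinearEquiv.sumArrowLequivProdArrow (Fin p) (Fin r) ℝ ℝ
  have hM : (fromBlocks X 0 0 Y).mulVecLin =
      (e₂.symm.toLinearMap ∘ₗ (X.mulVecLin.prodMap Y.mulVecLin)) ∘ₗ e₁.toLinearMap := by
    apply LinearMap.ext
    intro v
    funext x
    cases x <;>
      simp [e₁, e₂, fromBlocks_mulVec, LinearEquiv.sumArrowLequivProdArrow,
        Equiv.sumArrowEquivProdArrow, mulVec_zero]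
  rw [Matrix.rank, hM, LinearMap.range_comp_of_range_eq_top _ (LinearEquiv.range e₁),
    LinearMap.range_comp, range_prodMap']
  rw [LinearEquiv.finrank_map_eq]
  rw [(subProdEquiv _ _).finrank_eq, Module.finrank_prod]
  rfl

lemma matrix_rank_eq_zero_iff {m n : ℕ} (S : Matrix (Fin m) (Fin n) ℝ) :
    S.rank = 0 ↔ S = 0 := by
  constructor
  · intro h
    rw [Matrix.rank] at h
    have hrange : LinearMap.range S.mulVecLin = ⊥ := Submodule.finrank_eq_zero.mp h
    rw [LinearMap.range_eq_bot] at hrange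
    ext i j
    have := congrFun (congrArg (fun f => f (Pi.single j 1)) (congrArg DFunLike.coe hrange)) i
    simpa [Matrix.mulVecLin, Matrix.mulVec_single] using this
  · rintro rfl; exact Matrix.rank_zero

/-- Guttman rank additivity: for a block matrix `M = [[A, B],[C, D]]`
with `D` invertible, `rank M = rank D + rank (A − B D⁻¹ C)`; in particular
`rank M = rank D` iff the Schur complement `A − B D⁻¹ C` is the zero matrix. -/
theorem guttman_rank_additivity {p q r : ℕ}
    (A : Matrix (Fin p) (Fin q) ℝ) (B : Matrix (Fin p) (Fin r) ℝ)
    (C : Matrix (Fin r) (Fin q) ℝ) (D : Matrix (Fin r) (Fin r) ℝ)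
    (hD : IsUnit D.det) :
    (Matrix.fromBlocks A B C D).rank = D.rank + (A - B * D⁻¹ * C).rank ∧
      ((Matrix.fromBlocks A B C D).rank = D.rank ↔ A - B * D⁻¹ * C = 0) := by
  have hDinv : Invertible D := D.invertibleOfIsUnitDet hD
  have hinv : (⅟ D : Matrix (Fin r) (Fin r) ℝ) = D⁻¹ := invOf_eq_nonsing_inv D
  have hdec := Matrix.fromBlocks_eq_of_invertible₂₂ A B C D
  set S := A - B * D⁻¹ * C with hS
  have hS' : A - B * ⅟ D * C = S := by rw [hinv]
  have hU : IsUnit (fromBlocks (1 : Matrix (Fin p) (Fin p) ℝ) (B * ⅟ D) 0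
      (1 : Matrix (Fin r) (Fin r) ℝ)).det := by
    rw [det_fromBlocks_zero₂₁]; simp
  have hV : IsUnit (fromBlocks (1 : Matrix (Fin q) (Fin q) ℝ) 0 (⅟ D * C)
      (1 : Matrix (Fin r) (Fin r) ℝ)).det := by
    rw [det_fromBlocks_zero₁₂]; simp
  have hrank : (fromBlocks A B C D).rank = D.rank + S.rank := by
    rw [hdec, hS']
    rw [Matrix.rank_mul_eq_left_of_isUnit_det _ _ hV,
      Matrix.rank_mul_eq_right_of_isUnit_det _ _ hU,
      rank_fromBlocks_diag, add_comm]
  refine ⟨hrank, ?_⟩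
  rw [hrank, ← matrix_rank_eq_zero_iff S]
  omega
end

section
/- If a d×d real symmetric matrix Σ is positive semidefinite with the all-ones vector in its kernel and rank(Σ) ≤ q − 2 on a subset A ⊆ [d] with #A = q (i.e., rank(Σ_{A,A}) ≤ q − 2), then the principal submatrix γ(Σ)_{A,A} of the variogram γ(Σ) = d_Σ1ᵀ + 1d_Σᵀ − 2Σ is not strictly conditionally negative definite. -/
open Matrix

/-- The variogram map `γ(Σ) = d_Σ 1ᵀ + 1 d_Σᵀ − 2Σ`. -/
def gammaMap {d : ℕ} (S : Matrix (Fin d) (Fin d) ℝ) : Matrix (Fin d) (Fin d) ℝ :=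
  Matrix.vecMulVec S.diag (fun _ => 1) + Matrix.vecMulVec (fun _ => 1) S.diag - 2 • S

lemma dot_vecMulVec_mulVec {n : Type*} [Fintype n] (x u v w : n → ℝ) :
    x ⬝ᵥ (Matrix.vecMulVec u v).mulVec w = (x ⬝ᵥ u) * (v ⬝ᵥ w) := by
  have h : (Matrix.vecMulVec u v).mulVec w = (v ⬝ᵥ w) • u := by
    ext i
    simp only [mulVec, vecMulVec_apply, dotProduct, Pi.smul_apply, smul_eq_mul,
      Finset.sum_mul]
    exact Finset.sum_congr rfl fun j _ => by ring
  rw [h, dotProduct_smul, smul_eq_mul]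
  ring


/-- if `Σ` is positive semidefinite with `1` in its kernel and
`rank Σ_{A,A} ≤ #A − 2`, then the principal submatrix `γ(Σ)_{A,A}` is not strictly
conditionally negative definite. -/
theorem gamma_submatrix_not_strictlyCND {d q : ℕ} (S : Matrix (Fin d) (Fin d) ℝ)
    (hpsd : S.PosSemidef) (hker : S.mulVec (fun _ => 1) = 0)
    (A : Finset (Fin d)) (hq : A.card = q) (hq2 : 2 ≤ q)
    (hrank : (S.submatrix (Subtype.val : A → Fin d)
        (Subtype.val : A → Fin d)).rank ≤ q - 2) :
    ¬ (∀ y : A → ℝ, y ≠ 0 → ∑ i, y i = 0 →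
        y ⬝ᵥ ((gammaMap S).submatrix (Subtype.val : A → Fin d)
          (Subtype.val : A → Fin d)).mulVec y < 0) := by
  intro H
  set T := S.submatrix (Subtype.val : A → Fin d) (Subtype.val : A → Fin d) with hT
  have hcard : Fintype.card A = q := by simp [hq]
  -- kernel of T has dim ≥ 2
  have hrn := LinearMap.finrank_range_add_finrank_ker T.mulVecLin
  have hpi : Module.finrank ℝ (↥A → ℝ) = q := by
    rw [Module.finrank_pi]; exact hcard
  have hker2 : 2 ≤ Module.finrank ℝ (LinearMap.ker T.mulVecLin) := by
    rw [hpi] at hrn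
    have : T.rank = Module.finrank ℝ (LinearMap.range T.mulVecLin) := rfl
    omega
  -- sum functional restricted to the kernel
  set K := LinearMap.ker T.mulVecLin with hK
  let f : (↥A → ℝ) →ₗ[ℝ] ℝ :=
    { toFun := fun y => ∑ i, y i
      map_add' := by intro a b; simp [Finset.sum_add_distrib]
      map_smul' := by intro c a; simp [Finset.mul_sum] }
  let g : K →ₗ[ℝ] ℝ := f.comp K.subtype
  have hrng : Module.finrank ℝ (LinearMap.range g) ≤ 1 := by
    have := (LinearMap.range g).finrank_le
    simpa using this
  have hgk : 1 ≤ Module.finrank ℝ (LinearMap.ker g) := by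
    have := LinearMap.finrank_range_add_finrank_ker g
    omega
  obtain ⟨z, hz0⟩ : ∃ z : LinearMap.ker g, z ≠ 0 := by
    have : Nontrivial (LinearMap.ker g) := (Module.finrank_pos_iff (R := ℝ)).mp (by omega)
    exact exists_ne 0
  set y : ↥A → ℝ := ((z : K) : ↥A → ℝ) with hy
  have hyne : y ≠ 0 := by
    simpa only [hy, ne_eq, Submodule.coe_eq_zero] using hz0
  have hsum : ∑ i, y i = 0 := z.2
  have hTy : T.mulVec y = 0 := (z : K).2
  have hlt := H y hyne hsum
  have heq : y ⬝ᵥ ((gammaMap S).submatrix (Subtype.val : A → Fin d)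
          (Subtype.val : A → Fin d)).mulVec y = 0 := by
    have hdot : y ⬝ᵥ T.mulVec y = 0 := by rw [hTy]; simp
    have hsub : (gammaMap S).submatrix (Subtype.val : A → Fin d)
          (Subtype.val : A → Fin d)
        = Matrix.vecMulVec (fun i : A => S.diag i.val) (fun _ => 1)
          + Matrix.vecMulVec (fun _ => 1) (fun i : A => S.diag i.val) - 2 • T := by
      ext i j
      simp only [gammaMap, Matrix.sub_apply, Matrix.add_apply, Matrix.smul_apply,
        submatrix_apply, vecMulVec_apply, Matrix.diag, hT]
    rw [hsub, sub_mulVec, add_mulVec, dotProduct_sub, dotProduct_add,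
      dot_vecMulVec_mulVec, dot_vecMulVec_mulVec, smul_mulVec,
      dotProduct_smul]
    have h1 : (fun _ : A => (1:ℝ)) ⬝ᵥ y = 0 := by
      simpa [dotProduct] using hsum
    have h2 : y ⬝ᵥ (fun _ : A => (1:ℝ)) = 0 := by
      simpa [dotProduct] using hsum
    rw [h1, h2, hdot]
    ring
  rw [heq] at hlt
  exact lt_irrefl 0 hlt
end
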